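/- arXiv:1101.0826 — 2 statements merged into one kernel-verified Lean document; each statement's English description precedes it below -/
import Mathlib

section
/- Let I ⊆ ℝ[x₁,…,xₙ] be an ideal and suppose P ∈ V_ℝ(I) is convex-singular, i.e., P is a singular point of V(I), P lies on the relative boundary of conv(V_ℝ(I)), and the tangent space of V(I) at P meets the relative interior of conv(V_ℝ(I)). Then I is not (1,k)-sos for any k ≥ 1. -/
open MvPolynomial Polynomial

noncomputable section

/-- The ring `ℝ[ε]/(ε^m)`. -/
abbrev Eps (m : ℕ) : Type := AdjoinRoot ((Polynomial.X : Polynomial ℝ) ^ m)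

/-- An element `a₀ + a₁ε + ⋯ + a_{m-1}ε^{m-1}` of `ℝ[ε]/(ε^m)` is nonnegative if it is zero
or `a_N > 0` where `N = min {j : a_j ≠ 0}` (equivalently some, or any, polynomial
representative of it has positive lowest-order nonzero coefficient). -/
def EpsNonneg {m : ℕ} (z : Eps m) : Prop :=
  z = 0 ∨ ∃ p : Polynomial ℝ, AdjoinRoot.mk _ p = z ∧ 0 < p.coeff p.natTrailingDegree

/-- The real vanishing set `V_ℝ(I) ⊆ ℝⁿ` of an ideal `I ⊆ ℝ[x₁,…,xₙ]`. -/
def realVariety {n : ℕ} (I : Ideal (MvPolynomial (Fin n) ℝ)) : Set (Fin n → ℝ) :=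
  {P | ∀ p ∈ I, MvPolynomial.eval P p = 0}

/-- An `ℝ`-algebra homomorphism `φ : A → ℝ[ε]/(ε^m)` is at `P` if composing it with the
unique `ℝ`-algebra homomorphism `ℝ[ε]/(ε^m) → ℝ` gives evaluation at `P`; i.e. for every `p`,
`φ(p mod I)` agrees with `eval P p` modulo the ideal `(ε)`. -/
def AtPoint {n m : ℕ} (I : Ideal (MvPolynomial (Fin n) ℝ)) (P : Fin n → ℝ)
    (φ : (MvPolynomial (Fin n) ℝ ⧸ I) →ₐ[ℝ] Eps m) : Prop :=
  ∀ p : MvPolynomial (Fin n) ℝ,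
    φ (Ideal.Quotient.mk I p) - algebraMap ℝ (Eps m) (MvPolynomial.eval P p)
      ∈ Ideal.span {AdjoinRoot.root ((Polynomial.X : Polynomial ℝ) ^ m)}

/-- `f ∈ A = ℝ[x₁,…,xₙ]/I` is strongly nonnegative at `P` if for every `m` and every
`ℝ`-algebra homomorphism `φ : A → ℝ[ε]/(ε^m)` at `P`, `φ(f)` is nonnegative. -/
def StronglyNonnegAt {n : ℕ} (I : Ideal (MvPolynomial (Fin n) ℝ)) (P : Fin n → ℝ)
    (f : MvPolynomial (Fin n) ℝ ⧸ I) : Prop :=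
  ∀ (m : ℕ) (φ : (MvPolynomial (Fin n) ℝ ⧸ I) →ₐ[ℝ] Eps m),
    AtPoint I P φ → EpsNonneg (φ f)

/-- `f` is strongly nonnegative on `V(I)` if it is strongly nonnegative at every `P ∈ V_ℝ(I)`. -/
def StronglyNonneg {n : ℕ} (I : Ideal (MvPolynomial (Fin n) ℝ))
    (f : MvPolynomial (Fin n) ℝ ⧸ I) : Prop :=
  ∀ P ∈ realVariety I, StronglyNonnegAt I P f

/-- `f` is `k`-sos modulo `I`: `f ≡ Σᵢ gᵢ² (mod I)` with each `deg gᵢ ≤ k`. -/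
def KSosMod {n : ℕ} (I : Ideal (MvPolynomial (Fin n) ℝ)) (k : ℕ)
    (f : MvPolynomial (Fin n) ℝ) : Prop :=
  ∃ (r : ℕ) (g : Fin r → MvPolynomial (Fin n) ℝ),
    (∀ i, (g i).totalDegree ≤ k) ∧ f - ∑ i, (g i) ^ 2 ∈ I

/-- `f` is a sum of squares modulo `I` (no degree bound). -/
def SosMod {n : ℕ} (I : Ideal (MvPolynomial (Fin n) ℝ)) (f : MvPolynomial (Fin n) ℝ) : Prop :=
  ∃ (r : ℕ) (g : Fin r → MvPolynomial (Fin n) ℝ), f - ∑ i, (g i) ^ 2 ∈ I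

/-- `I` is `(d,k)`-sos: every polynomial of degree at most `d` which is nonnegative on
`V_ℝ(I)` is `k`-sos modulo `I`. -/
def IsDKSos {n : ℕ} (I : Ideal (MvPolynomial (Fin n) ℝ)) (d k : ℕ) : Prop :=
  ∀ f : MvPolynomial (Fin n) ℝ, f.totalDegree ≤ d →
    (∀ P ∈ realVariety I, 0 ≤ MvPolynomial.eval P f) → KSosMod I k f

/-- `I` is weakly `(1,k)`-sos: every polynomial of degree at most `1` whose image in
`A = ℝ[x]/I` is strongly nonnegative on `V(I)` is `k`-sos modulo `I`. -/
def WeaklyOneKSos {n : ℕ} (I : Ideal (MvPolynomial (Fin n) ℝ)) (k : ℕ) : Prop :=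
  ∀ f : MvPolynomial (Fin n) ℝ, f.totalDegree ≤ 1 →
    StronglyNonneg I (Ideal.Quotient.mk I f) → KSosMod I k f

/-- The maximal ideal `m_P ⊆ A = ℝ[x]/I` of functions vanishing at `P`. -/
def mIdeal {n : ℕ} (I : Ideal (MvPolynomial (Fin n) ℝ)) (P : Fin n → ℝ) :
    Ideal (MvPolynomial (Fin n) ℝ ⧸ I) :=
  Ideal.map (Ideal.Quotient.mk I) (RingHom.ker (MvPolynomial.eval P))

/-- A commutative ring is a regular local ring if it is Noetherian, local, and the dimension
of its cotangent space (equivalently, of its tangent space) over the residue field equals its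
Krull dimension. -/
def IsRegularLocal (R : Type) [CommRing R] : Prop :=
  IsNoetherianRing R ∧ ∃ _h : IsLocalRing R,
    (Module.finrank (IsLocalRing.ResidueField R) (IsLocalRing.CotangentSpace R) :
      WithBot (WithTop ℕ)) = ringKrullDim R

/-- `V(I)` is nonsingular at `P` if the localization of `A = ℝ[x]/I` at the maximal ideal
`m_P` is a regular local ring. -/
def IsNonsingularAt {n : ℕ} (I : Ideal (MvPolynomial (Fin n) ℝ)) (P : Fin n → ℝ) : Prop :=
  ∃ hp : (mIdeal I P).IsPrime, IsRegularLocal (@Localization.AtPrime _ _ (mIdeal I P) hp)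

/-- The tangent space of `V(I)` at `P`, viewed as the set of vectors `v ∈ ℝⁿ` such that there
is an `ℝ`-algebra homomorphism `A → ℝ[ε]/(ε²)` at `P` sending each `xᵢ` to `Pᵢ + vᵢ ε`. -/
def tangentVectors {n : ℕ} (I : Ideal (MvPolynomial (Fin n) ℝ)) (P : Fin n → ℝ) :
    Set (Fin n → ℝ) :=
  {v | ∃ φ : (MvPolynomial (Fin n) ℝ ⧸ I) →ₐ[ℝ] Eps 2,
    ∀ i : Fin n, φ (Ideal.Quotient.mk I (MvPolynomial.X i)) =
      algebraMap ℝ (Eps 2) (P i) + (v i) • AdjoinRoot.root ((Polynomial.X : Polynomial ℝ) ^ 2)}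

/-- `P ∈ V_ℝ(I)` is convex-singular: `P` is a singular point of `V(I)`, lies on the relative
boundary of `conv(V_ℝ(I))`, and the (affine) tangent space at `P` meets the relative interior
of `conv(V_ℝ(I))`. -/
def ConvexSingular {n : ℕ} (I : Ideal (MvPolynomial (Fin n) ℝ)) (P : Fin n → ℝ) : Prop :=
  ¬ IsNonsingularAt I P ∧
  P ∈ intrinsicFrontier ℝ (convexHull ℝ (realVariety I)) ∧
  ∃ v ∈ tangentVectors I P, P + v ∈ intrinsicInterior ℝ (convexHull ℝ (realVariety I))

/-- The `k`-th theta body of `I`. -/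
def thetaBody {n : ℕ} (I : Ideal (MvPolynomial (Fin n) ℝ)) (k : ℕ) : Set (Fin n → ℝ) :=
  {x | ∀ f : MvPolynomial (Fin n) ℝ, f.totalDegree ≤ 1 → KSosMod I k f →
    0 ≤ MvPolynomial.eval x f}

/-- `I` is `TH_k`-exact if the `k`-th theta body equals the closure of the convex hull of
`V_ℝ(I)`. -/
def ThetaExact {n : ℕ} (I : Ideal (MvPolynomial (Fin n) ℝ)) (k : ℕ) : Prop :=
  thetaBody I k = closure (convexHull ℝ (realVariety I))

/-- `I` is real radical: whenever `f^(2m) + Σᵢ gᵢ² ∈ I` for some `m ≥ 1`, we have `f ∈ I`. -/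
def IsRealRadical {n : ℕ} (I : Ideal (MvPolynomial (Fin n) ℝ)) : Prop :=
  ∀ f : MvPolynomial (Fin n) ℝ,
    (∃ m : ℕ, 1 ≤ m ∧ ∃ (r : ℕ) (g : Fin r → MvPolynomial (Fin n) ℝ),
      f ^ (2 * m) + ∑ i, (g i) ^ 2 ∈ I) → f ∈ I

/-- A formal power series is nonnegative if it is zero or its leading (lowest-order nonzero)
coefficient is positive. -/
def PSNonneg (F : PowerSeries ℝ) : Prop :=
  F = 0 ∨ ∃ N : ℕ, 0 < PowerSeries.coeff N F ∧ ∀ j < N, PowerSeries.coeff j F = 0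

/-- An `ℝ`-algebra homomorphism `φ : A → ℝ[[t]]` is at `P` if the preimage of the ideal `(t)`
is the maximal ideal of functions vanishing at `P`. -/
def PSAtPoint {n : ℕ} (I : Ideal (MvPolynomial (Fin n) ℝ)) (P : Fin n → ℝ)
    (φ : (MvPolynomial (Fin n) ℝ ⧸ I) →ₐ[ℝ] PowerSeries ℝ) : Prop :=
  ∀ p : MvPolynomial (Fin n) ℝ,
    (PowerSeries.constantCoeff (φ (Ideal.Quotient.mk I p)) = 0 ↔ MvPolynomial.eval P p = 0)

/-- The linear function induced by a polynomial `f` (of degree at most 1) on tangent vectors: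
`v ↦ Σᵢ (∂f/∂xᵢ) vᵢ`. -/
def linGrad {n : ℕ} (f : MvPolynomial (Fin n) ℝ) (v : Fin n → ℝ) : ℝ :=
  ∑ i : Fin n, MvPolynomial.eval (0 : Fin n → ℝ) (MvPolynomial.pderiv i f) * v i

end

/-!
Separate `P` from the relative interior of `conv V_ℝ(I)` by a linear functional `G`. Then
`f = G(P) - G(x)` is an affine polynomial, nonnegative on `V_ℝ(I)` and positive at the point
`P + v` of the tangent space. Apply the tangent homomorphism `φ : A → ℝ[ε]/(ε²)` to a putative
identity `f ≡ Σ gᵢ² (mod I)`: the left side becomes `-G(v) ε ≠ 0`, while the constant terms of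
the `φ(gᵢ)` are reals whose squares sum to `f(P) = 0`, so every `φ(gᵢ)` is a multiple of `ε` and
every `φ(gᵢ)²` vanishes.
-/

local notation "ε" => AdjoinRoot.root ((Polynomial.X : Polynomial ℝ) ^ 2)

section Separation

theorem ContinuousLinearMap.lt_of_mem_interior_of_forall_le {F : Type*} [AddCommGroup F]
    [TopologicalSpace F] [ContinuousAdd F] [Module ℝ F] [ContinuousSMul ℝ F]
    {f : StrongDual ℝ F} (hf : f ≠ 0) {s : Set F} {c : ℝ} (hs : ∀ a ∈ s, f a ≤ c) {y : F}
    (hy : y ∈ interior s) : f y < c := by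
  have : f '' interior s ⊆ Set.Iio c := by
    rw [← interior_Iic]
    exact interior_maximal (fun _ ⟨a, ha, hfa⟩ => hfa ▸ hs a (interior_subset ha))
      (f.isOpenMap_of_ne_zero hf _ isOpen_interior)
  exact this ⟨y, hy, rfl⟩

variable {E : Type*} [NormedAddCommGroup E] [NormedSpace ℝ E]

theorem Convex.exists_forall_le_lt_of_mem_intrinsicFrontier {C : Set E} (hC : Convex ℝ C)
    {x y : E} (hx : x ∈ intrinsicFrontier ℝ C) (hy : y ∈ intrinsicInterior ℝ C) :
    ∃ G : StrongDual ℝ E, (∀ z ∈ C, G z ≤ G x) ∧ G y < G x := by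
  set W := affineSpan ℝ C
  obtain ⟨x', hx'fr, rfl⟩ := hx
  obtain ⟨y', hy'int, rfl⟩ := hy
  have : Nonempty W := ⟨x'⟩
  let Ψ := AffineIsometryEquiv.vaddConst ℝ x'
  let A : Set W.direction := Ψ ⁻¹' ((↑) ⁻¹' C)
  have hA : Convex ℝ A := hC.affine_preimage (W.subtype.comp Ψ.toAffineEquiv.toAffineMap)
  have hintA : interior A = Ψ ⁻¹' interior ((↑) ⁻¹' C) :=
    (Ψ.toHomeomorph.preimage_interior _).symm
  have hΨ : ∀ z : W, Ψ (z -ᵥ x') = z := fun z => vsub_vadd z x'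
  have h0 : (0 : W.direction) ∉ interior A := by
    rw [hintA, Set.mem_preimage, ← vsub_self x', hΨ]
    exact hx'fr.2
  have hyA : y' -ᵥ x' ∈ interior A := by
    rw [hintA, Set.mem_preimage, hΨ]
    exact hy'int
  obtain ⟨f, hf0, hfA⟩ := geometric_hahn_banach_of_nonempty_interior_point hA h0 ⟨_, hyA⟩
  obtain ⟨G, hGf, -⟩ := exists_extension_norm_eq W.direction f
  have hGsub : ∀ z : W, G z - G x' = f (z -ᵥ x') := fun z => by
    rw [← hGf, AffineSubspace.coe_vsub, vsub_eq_sub, map_sub]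
  refine ⟨G, fun z hz => ?_, ?_⟩
  · have hzA : (⟨z, subset_affineSpan ℝ C hz⟩ : W) -ᵥ x' ∈ A := by
      simpa [A, hΨ] using hz
    have := hGsub ⟨z, subset_affineSpan ℝ C hz⟩
    linarith [map_zero f ▸ hfA _ hzA]
  · have := hGsub y'
    linarith [map_zero f ▸ f.lt_of_mem_interior_of_forall_le hf0 hfA hyA]

end Separation

section DualNumbers

theorem root_X_sq_ne_zero : ε ≠ 0 := by
  rw [← AdjoinRoot.mk_X, Ne, AdjoinRoot.mk_eq_zero]
  intro h
  simpa using Polynomial.natDegree_le_of_dvd h Polynomial.X_ne_zero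

noncomputable def epsConstCoeff : Eps 2 →ₐ[ℝ] ℝ :=
  AdjoinRoot.liftAlgHom _ (Algebra.ofId ℝ ℝ) 0 (by simp)

@[simp]
theorem epsConstCoeff_root : epsConstCoeff ε = 0 :=
  AdjoinRoot.liftAlgHom_root _ _ _ _

theorem sq_eq_zero_of_epsConstCoeff_eq_zero {z : Eps 2} (h : epsConstCoeff z = 0) :
    z ^ 2 = 0 := by
  obtain ⟨p, rfl⟩ := AdjoinRoot.mk_surjective z
  rw [epsConstCoeff, AdjoinRoot.liftAlgHom_mk] at h
  obtain ⟨q, rfl⟩ :=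
    Polynomial.X_dvd_iff.mpr (by simpa [Polynomial.coeff_zero_eq_eval_zero] using h)
  rw [← map_pow, mul_pow, map_mul, AdjoinRoot.mk_self, zero_mul]

theorem sum_sq_eq_zero_of_epsConstCoeff_eq_zero {ι : Type*} (s : Finset ι) (z : ι → Eps 2)
    (h : epsConstCoeff (∑ i ∈ s, z i ^ 2) = 0) : ∑ i ∈ s, z i ^ 2 = 0 := by
  simp only [map_sum, map_pow] at h
  refine Finset.sum_eq_zero fun i hi => sq_eq_zero_of_epsConstCoeff_eq_zero ?_
  exact pow_eq_zero_iff two_ne_zero |>.mp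
    ((Finset.sum_eq_zero_iff_of_nonneg fun i _ => sq_nonneg _).mp h i hi)

end DualNumbers

section LinearFormPoly

variable {σ R : Type*} [Fintype σ] [DecidableEq σ] [CommRing R]

theorem LinearMap.apply_eq_sum_mul_single (G : (σ → R) →ₗ[R] R) (x : σ → R) :
    G x = ∑ i, x i * G (Pi.single i 1) := by
  conv_lhs => rw [← Finset.univ_sum_single x, map_sum]
  refine Finset.sum_congr rfl fun i _ => ?_
  rw [← smul_eq_mul, ← map_smul, ← Pi.single_smul, smul_eq_mul, mul_one]

noncomputable def linearFormPoly (G : (σ → R) →ₗ[R] R) : MvPolynomial σ R :=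
  ∑ i, MvPolynomial.C (G (Pi.single i 1)) * MvPolynomial.X i

variable (G : (σ → R) →ₗ[R] R)

theorem totalDegree_linearFormPoly_le [Nontrivial R] : (linearFormPoly G).totalDegree ≤ 1 :=
  (totalDegree_finsetSum _ _).trans <| Finset.sup_le fun i _ =>
    (totalDegree_mul _ _).trans <| by simp

theorem eval_linearFormPoly (x : σ → R) : eval x (linearFormPoly G) = G x := by
  simp [linearFormPoly, G.apply_eq_sum_mul_single x, mul_comm]

theorem aeval_linearFormPoly_algebraMap_add_smul {A : Type*} [CommRing A] [Algebra R A]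
    (p v : σ → R) (u : A) :
    aeval (fun i => algebraMap R A (p i) + v i • u) (linearFormPoly G) =
      algebraMap R A (G p) + G v • u := by
  simp only [linearFormPoly, map_sum, map_mul, MvPolynomial.aeval_C, MvPolynomial.aeval_X,
    G.apply_eq_sum_mul_single p, G.apply_eq_sum_mul_single v, Finset.sum_smul]
  rw [← Finset.sum_add_distrib]
  refine Finset.sum_congr rfl fun i _ => ?_
  simp only [Algebra.smul_def, map_mul]
  ring

end LinearFormPoly

theorem Ideal.Quotient.algHom_mk_eq_aeval {σ R A : Type*} [CommRing R] [CommRing A]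
    [Algebra R A] {I : Ideal (MvPolynomial σ R)} (φ : (MvPolynomial σ R ⧸ I) →ₐ[R] A)
    (p : MvPolynomial σ R) :
    φ (Ideal.Quotient.mk I p) = aeval (fun i => φ (Ideal.Quotient.mk I (X i))) p :=
  DFunLike.congr_fun (aeval_unique (φ.comp (Ideal.Quotient.mkₐ R I))) p

theorem KSosMod.sosMod {n k : ℕ} {I : Ideal (MvPolynomial (Fin n) ℝ)}
    {f : MvPolynomial (Fin n) ℝ} (hf : KSosMod I k f) : SosMod I f :=
  let ⟨r, g, _, hfg⟩ := hf
  ⟨r, g, hfg⟩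

theorem SosMod.algHom_mk_eq_zero {n : ℕ} {I : Ideal (MvPolynomial (Fin n) ℝ)}
    {f : MvPolynomial (Fin n) ℝ} (hf : SosMod I f)
    (φ : (MvPolynomial (Fin n) ℝ ⧸ I) →ₐ[ℝ] Eps 2)
    (h : epsConstCoeff (φ (Ideal.Quotient.mk I f)) = 0) : φ (Ideal.Quotient.mk I f) = 0 := by
  obtain ⟨r, g, hfg⟩ := hf
  have hφf : φ (Ideal.Quotient.mk I f) = ∑ i, φ (Ideal.Quotient.mk I (g i)) ^ 2 := by
    simp [Ideal.Quotient.eq.mpr hfg]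
  rw [hφf] at h ⊢
  exact sum_sq_eq_zero_of_epsConstCoeff_eq_zero _ _ h

theorem not_oneksos_of_convexSingular_general {n : ℕ} (I : Ideal (MvPolynomial (Fin n) ℝ))
    (P : Fin n → ℝ) (hcs : ConvexSingular I P) :
    ∀ k : ℕ, 1 ≤ k → ¬ IsDKSos I 1 k := by
  intro k _ hsos
  obtain ⟨-, hfront, v, ⟨φ, hφ⟩, hv⟩ := hcs
  obtain ⟨G, hGle, hGlt⟩ :=
    (convex_convexHull ℝ _).exists_forall_le_lt_of_mem_intrinsicFrontier hfront hv
  set f := MvPolynomial.C (G P) - linearFormPoly (G : (Fin n → ℝ) →ₗ[ℝ] ℝ)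
  have hf_deg : f.totalDegree ≤ 1 :=
    (totalDegree_sub _ _).trans (max_le (by simp) (totalDegree_linearFormPoly_le _))
  have hf_nonneg : ∀ x ∈ realVariety I, 0 ≤ eval x f := fun x hx => by
    simp only [f, map_sub, MvPolynomial.eval_C, eval_linearFormPoly, sub_nonneg]
    exact hGle x (subset_convexHull ℝ _ hx)
  have hφf : φ (Ideal.Quotient.mk I f) = -(G v • ε) := by
    rw [Ideal.Quotient.algHom_mk_eq_aeval, funext hφ, map_sub, MvPolynomial.aeval_C,
      aeval_linearFormPoly_algebraMap_add_smul, ContinuousLinearMap.coe_coe,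
      sub_add_cancel_left]
  have hGv : G v = 0 := by
    have := (hsos f hf_deg hf_nonneg).sosMod.algHom_mk_eq_zero φ (by simp [hφf])
    rwa [hφf, neg_eq_zero, smul_eq_zero_iff_left root_X_sq_ne_zero] at this
  linarith [map_add G P v]

/-- If `P ∈ V_ℝ(I)` is convex-singular, then `I` is not `(1,k)`-sos for any `k ≥ 1`. -/
theorem not_oneksos_of_convexSingular {n : ℕ} (I : Ideal (MvPolynomial (Fin n) ℝ))
    (P : Fin n → ℝ) (hP : P ∈ realVariety I) (hcs : ConvexSingular I P) :
    ∀ k : ℕ, 1 ≤ k → ¬ IsDKSos I 1 k :=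
  not_oneksos_of_convexSingular_general I P hcs
end

section
/- Let I ⊆ ℝ[x₁,…,xₙ] be a real radical ideal and k ≥ 1. Then the following are equivalent: (1) I is weakly (1,k)-sos; (2) I is (1,k)-sos; (3) I is TH_k-exact. -/
open MvPolynomial Polynomial

/-!
Polynomials of degree at most one are identified with their coefficient vectors in `ℝ × ℝⁿ`.
Strong nonnegativity lies between positivity and nonnegativity on `V_ℝ(I)` (test it with the
evaluation `A → ℝ[ε]/(ε)`), so `(1,k)`-sos implies weakly `(1,k)`-sos, and weakly `(1,k)`-sos
implies `TH_k`-exactness: a point outside the closed convex hull is cut off by a linear function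
that is positive on `V_ℝ(I)`.

For the converse, real radicality makes `A = ℝ[x]/I` real reduced, and this makes the cone of
`k`-sos linear polynomials closed. By a Gram matrix argument a sum of squares from a
finite-dimensional space needs only as many squares as its dimension; the sum-of-squares map on
coordinates is then a quadratic map vanishing only at `0`, hence proper. Farkas' lemma for this
closed cone turns a linear polynomial that is nonnegative on `V_ℝ(I)` but not `k`-sos into a point
of `TH_k` outside `conv V_ℝ(I)`, unless `-1` is `k`-sos, in which case `I` is the whole ring.
-/

section SumSq
variable {R : Type*} [CommRing R] [Algebra ℝ R]

lemma sum_sq_sum_smul {r d : ℕ} (A : Fin r → Fin d → ℝ) (e : Fin d → R) :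
    ∑ i, (∑ l, A i l • e l) ^ 2 = ∑ l, ∑ l', (∑ i, A i l * A i l') • (e l * e l') := by
  simp only [sq, Finset.sum_mul_sum, smul_mul_smul_comm, Finset.sum_smul]
  rw [Finset.sum_comm]
  exact Finset.sum_congr rfl fun l _ => Finset.sum_comm

open scoped MatrixOrder in
lemma exists_sum_sq_eq_sum_sq_finrank (U : Submodule ℝ R) [FiniteDimensional ℝ U] {r : ℕ}
    (u : Fin r → U) :
    ∃ w : Fin (Module.finrank ℝ U) → U, ∑ i, (u i : R) ^ 2 = ∑ j, (w j : R) ^ 2 := by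
  set b := Module.finBasis ℝ U
  have hcoord : ∀ c, (b.equivFun.symm c : R) = ∑ l, c l • (b l : R) := fun c => by
    simp [b.equivFun_symm_apply]
  -- a square factorisation `AᵀA = BᵀB` of the Gram matrix cuts the number of squares to `dim U`
  obtain ⟨B, hB⟩ := CStarAlgebra.nonneg_iff_eq_star_mul_self.mp
    (Matrix.posSemidef_conjTranspose_mul_self (Matrix.of fun i => b.equivFun (u i))).nonneg
  refine ⟨fun j => b.equivFun.symm (B j), ?_⟩
  have hu : ∀ i, (u i : R) = ∑ l, b.equivFun (u i) l • (b l : R) := fun i => by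
    rw [← hcoord, b.equivFun.symm_apply_apply]
  simp only [hu, hcoord]
  rw [sum_sq_sum_smul, sum_sq_sum_smul (fun j l => B j l)]
  refine Finset.sum_congr rfl fun l _ => Finset.sum_congr rfl fun l' _ => ?_
  have := congrFun (congrFun hB l) l'
  simp only [Matrix.mul_apply, Matrix.conjTranspose_apply, Matrix.of_apply, star_trivial,
    Matrix.star_apply] at this
  rw [this]

lemma continuous_map_sum_sq_sum_smul {r d : ℕ} {F : Type*} [NormedAddCommGroup F]
    [NormedSpace ℝ F] (p : R →ₗ[ℝ] F) (e : Fin d → R) :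
    Continuous fun a : Fin r → Fin d → ℝ => p (∑ j, (∑ l, a j l • e l) ^ 2) := by
  simp only [sum_sq_sum_smul, map_sum, map_smul]
  fun_prop

end SumSq

open Filter in
lemma isClosed_range_of_homogeneous {E F : Type*} [NormedAddCommGroup E] [NormedSpace ℝ E]
    [FiniteDimensional ℝ E] [NormedAddCommGroup F] [NormedSpace ℝ F] [FiniteDimensional ℝ F]
    {Φ : E → F} (hc : Continuous Φ) (hhom : ∀ (t : ℝ) a, Φ (t • a) = t ^ 2 • Φ a)
    (hzero : ∀ a, Φ a = 0 → a = 0) : IsClosed (Set.range Φ) := by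
  obtain ⟨m, hm, hbound⟩ : ∃ m > 0, ∀ a, m * ‖a‖ ^ 2 ≤ ‖Φ a‖ := by
    rcases subsingleton_or_nontrivial E with hE | hE
    · exact ⟨1, one_pos, fun a => by simp [Subsingleton.elim a 0]⟩
    obtain ⟨u, hu, hmin⟩ := (isCompact_sphere (0 : E) 1).exists_isMinOn
      (NormedSpace.sphere_nonempty.2 zero_le_one) (continuous_norm.comp hc).continuousOn
    refine ⟨‖Φ u‖, norm_pos_iff.2 fun h => ?_, fun a => ?_⟩
    · simp [hzero u h] at hu
    rcases eq_or_ne a 0 with rfl | ha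
    · simp
    have hsph : ‖a‖⁻¹ • a ∈ Metric.sphere (0 : E) 1 := by
      simp [norm_smul, ha]
    have hmin_a : ‖Φ u‖ ≤ (‖a‖ ^ 2)⁻¹ * ‖Φ a‖ := by
      simpa [hhom, norm_smul] using hmin hsph
    have hna : 0 < ‖a‖ ^ 2 := by positivity
    calc ‖Φ u‖ * ‖a‖ ^ 2 ≤ (‖a‖ ^ 2)⁻¹ * ‖Φ a‖ * ‖a‖ ^ 2 := by gcongr
      _ = ‖Φ a‖ := by field_simp
  have hproper : IsProperMap Φ := by
    refine isProperMap_iff_tendsto_cocompact.2 ⟨hc, ?_⟩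
    rw [← Metric.cobounded_eq_cocompact, ← Metric.cobounded_eq_cocompact,
      ← tendsto_norm_atTop_iff_cobounded]
    refine tendsto_atTop_mono hbound ?_
    exact ((tendsto_pow_atTop two_ne_zero).comp tendsto_norm_cobounded_atTop).const_mul_atTop hm
  exact hproper.isClosedMap.isClosed_range

lemma Submodule.exists_linearMap_injOn {K V : Type*} [Field K] [AddCommGroup V] [Module K V]
    (S : Submodule K V) [FiniteDimensional K S] :
    ∃ p : V →ₗ[K] (Fin (Module.finrank K S) → K), Set.InjOn p S := by
  obtain ⟨π, hπ⟩ := LinearMap.exists_leftInverse_of_injective S.subtype S.ker_subtype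
  refine ⟨(Module.finBasis K S).equivFun.toLinearMap ∘ₗ π, fun s hs t ht h => ?_⟩
  have hst : π s = π t := (Module.finBasis K S).equivFun.injective h
  have h₁ : π s = ⟨s, hs⟩ := LinearMap.congr_fun hπ ⟨s, hs⟩
  have h₂ : π t = ⟨t, ht⟩ := LinearMap.congr_fun hπ ⟨t, ht⟩
  exact congrArg Subtype.val (h₁.symm.trans (hst.trans h₂))

instance Submodule.finiteDimensional_mul {K A : Type*} [Field K] [Ring A] [Algebra K A]
    (M N : Submodule K A) [FiniteDimensional K M] [FiniteDimensional K N] :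
    FiniteDimensional K (M * N : Submodule K A) := by
  rw [← Submodule.fg_iff_finiteDimensional] at *
  exact Submodule.FG.mul ‹_› ‹_›

theorem isClosed_setOf_eq_sum_sq {R : Type*} [CommRing R] [Algebra ℝ R] {E : Type*}
    [NormedAddCommGroup E] [NormedSpace ℝ E] [FiniteDimensional ℝ E]
    (U : Submodule ℝ R) [FiniteDimensional ℝ U]
    (hU : ∀ u : Fin (Module.finrank ℝ U) → U, ∑ j, (u j : R) ^ 2 = 0 → u = 0)
    (L : E →ₗ[ℝ] R) :
    IsClosed {x | ∃ (r : ℕ) (u : Fin r → U), L x = ∑ i, (u i : R) ^ 2} := by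
  set b := Module.finBasis ℝ U
  set sq : (Fin (Module.finrank ℝ U) → Fin (Module.finrank ℝ U) → ℝ) → R :=
    fun a => ∑ j, (b.equivFun.symm (a j) : R) ^ 2
  let S : Submodule ℝ R := LinearMap.range L ⊔ U * U
  have hsqS : ∀ a, sq a ∈ S := fun a => Submodule.mem_sup_right <| Submodule.sum_mem _ fun j _ =>
    pow_two (b.equivFun.symm (a j) : R) ▸
      Submodule.mul_mem_mul (SetLike.coe_mem _) (SetLike.coe_mem _)
  have hLS : ∀ x, L x ∈ S := fun x => Submodule.mem_sup_left (LinearMap.mem_range_self L x)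
  obtain ⟨p, hp⟩ := S.exists_linearMap_injOn
  have hcont : Continuous (p ∘ sq) := by
    have : p ∘ sq = fun a => p (∑ j, (∑ l, a j l • (b l : R)) ^ 2) := by
      funext a
      simp [sq, b.equivFun_symm_apply]
    exact this ▸ continuous_map_sum_sq_sum_smul p _
  have hhom : ∀ (t : ℝ) a, (p ∘ sq) (t • a) = t ^ 2 • (p ∘ sq) a := fun t a => by
    simp only [Function.comp_apply, sq, Pi.smul_apply, map_smul, Submodule.coe_smul,
      _root_.smul_pow, ← Finset.smul_sum]
  have hzero : ∀ a, (p ∘ sq) a = 0 → a = 0 := fun a ha => by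
    have h0 : sq a = 0 := hp (hsqS a) S.zero_mem (ha.trans (map_zero p).symm)
    have := congrFun (hU (fun j => b.equivFun.symm (a j)) h0)
    funext j
    exact b.equivFun.symm.injective ((this j).trans (map_zero _).symm)
  have hset : {x | ∃ (r : ℕ) (u : Fin r → U), L x = ∑ i, (u i : R) ^ 2} =
      (p ∘ L) ⁻¹' Set.range (p ∘ sq) := by
    ext x
    constructor
    · rintro ⟨r, u, hx⟩
      obtain ⟨w, hw⟩ := exists_sum_sq_eq_sum_sq_finrank U u
      refine ⟨fun j => b.equivFun (w j), ?_⟩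
      simp only [Function.comp_apply, sq, hx, hw, LinearEquiv.symm_apply_apply]
    · rintro ⟨a, ha⟩
      exact ⟨_, fun j => b.equivFun.symm (a j), hp (hLS x) (hsqS a) ha.symm⟩
  rw [hset]
  exact (isClosed_range_of_homogeneous hcont hhom hzero).preimage
    (LinearMap.continuous_of_finiteDimensional (p ∘ₗ L))

lemma ProperCone.hyperplane_separation_point_of_neg_notMem {E : Type*} [TopologicalSpace E]
    [AddCommGroup E] [IsTopologicalAddGroup E] [Module ℝ E] [ContinuousSMul ℝ E]
    [LocallyConvexSpace ℝ E]
    (C : ProperCone ℝ E) {e x₀ : E} (he : e ∈ C) (hne : -e ∉ C) (hx₀ : x₀ ∉ C) :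
    ∃ ℓ : StrongDual ℝ E, (∀ x ∈ C, 0 ≤ ℓ x) ∧ 0 < ℓ e ∧ ℓ x₀ < 0 := by
  obtain ⟨ℓ₁, hℓ₁C, hℓ₁e⟩ := C.hyperplane_separation_point hne
  obtain ⟨ℓ₀, hℓ₀C, hℓ₀x⟩ := C.hyperplane_separation_point hx₀
  rw [map_neg, neg_neg_iff_pos] at hℓ₁e
  -- the combination is positive at `e` thanks to `ℓ₁`, and still negative at `x₀`
  refine ⟨(|ℓ₁ x₀| + 1) • ℓ₀ - ℓ₀ x₀ • ℓ₁, fun x hx => ?_, ?_, ?_⟩ <;>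
    simp only [sub_apply, smul_apply, smul_eq_mul]
  · nlinarith [hℓ₀C x hx, hℓ₁C x hx, abs_nonneg (ℓ₁ x₀)]
  · nlinarith [hℓ₀C e he, abs_nonneg (ℓ₁ x₀)]
  · nlinarith [le_abs_self (ℓ₁ x₀)]

section LinPoly
variable {n : ℕ}

noncomputable def linPoly : ℝ × (Fin n → ℝ) →ₗ[ℝ] MvPolynomial (Fin n) ℝ :=
  (Algebra.linearMap ℝ _).coprod (Fintype.linearCombination ℝ MvPolynomial.X)

lemma eval_linPoly (x : Fin n → ℝ) (v : ℝ × (Fin n → ℝ)) :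
    MvPolynomial.eval x (linPoly v) = v.1 + v.2 ⬝ᵥ x := by
  simp [linPoly, Fintype.linearCombination_apply, dotProduct, MvPolynomial.smul_eval]

lemma totalDegree_linPoly_le (v : ℝ × (Fin n → ℝ)) : (linPoly v).totalDegree ≤ 1 := by
  simp only [linPoly, LinearMap.coprod_apply, Fintype.linearCombination_apply,
    Algebra.linearMap_apply, MvPolynomial.algebraMap_eq]
  refine (MvPolynomial.totalDegree_add _ _).trans (max_le (by simp) ?_)
  refine (MvPolynomial.totalDegree_finsetSum_le fun i _ => ?_)
  exact (MvPolynomial.totalDegree_smul_le _ _).trans (MvPolynomial.totalDegree_X i).le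

lemma exists_linPoly_eq {f : MvPolynomial (Fin n) ℝ} (hf : f.totalDegree ≤ 1) :
    ∃ v, linPoly v = f := by
  refine ⟨(f.coeff 0, fun i => f.coeff (Finsupp.single i 1)), MvPolynomial.ext _ _ fun d => ?_⟩
  simp only [linPoly, LinearMap.coprod_apply, Algebra.linearMap_apply,
    MvPolynomial.algebraMap_eq, Fintype.linearCombination_apply, MvPolynomial.coeff_add,
    MvPolynomial.coeff_C, MvPolynomial.coeff_sum, MvPolynomial.coeff_smul, MvPolynomial.coeff_X,
    smul_eq_mul, mul_ite, mul_one, mul_zero]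
  by_cases hd0 : d = 0
  · subst hd0
    simp [Finsupp.single_eq_zero, eq_comm]
  obtain ⟨i, rfl⟩ | hd1 := em (∃ i, d = Finsupp.single i 1)
  · simp [Finsupp.single_left_inj, Ne.symm hd0]
  have hcoeff : f.coeff d = 0 := by
    by_contra hne
    have hdeg := (MvPolynomial.le_totalDegree (MvPolynomial.mem_support_iff.2 hne)).trans hf
    rcases Nat.le_one_iff_eq_zero_or_eq_one.1 hdeg with h | h
    · exact hd0 ((Finsupp.degree_eq_zero_iff d).1 h)
    · exact hd1 ((Finsupp.sum_eq_one_iff d).1 h)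
  simp [hcoeff, Ne.symm hd0, fun i => Ne.symm (fun h => hd1 ⟨i, h⟩)]
end LinPoly

section KSos
variable {n k : ℕ} {I : Ideal (MvPolynomial (Fin n) ℝ)} {f g : MvPolynomial (Fin n) ℝ}

lemma KSosMod.eval_nonneg (hf : KSosMod I k f) {P : Fin n → ℝ} (hP : P ∈ realVariety I) :
    0 ≤ MvPolynomial.eval P f := by
  obtain ⟨r, g, -, hmem⟩ := hf
  have h := hP _ hmem
  rw [map_sub, sub_eq_zero, map_sum] at h
  exact h ▸ Finset.sum_nonneg fun i _ => by rw [map_pow]; positivity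

lemma kSosMod_of_mem (hf : f ∈ I) : KSosMod I k f :=
  ⟨0, Fin.elim0, fun i => i.elim0, by simpa using hf⟩

lemma kSosMod_one : KSosMod I k 1 :=
  ⟨1, fun _ => 1, fun _ => by simp, by simp⟩

lemma KSosMod.add (hf : KSosMod I k f) (hg : KSosMod I k g) : KSosMod I k (f + g) := by
  obtain ⟨r, u, hu, hfu⟩ := hf
  obtain ⟨s, w, hw, hgw⟩ := hg
  refine ⟨r + s, Fin.append u w, Fin.addCases (by simpa using hu) (by simpa using hw), ?_⟩
  rw [Fin.sum_univ_add]
  simp only [Fin.append_left, Fin.append_right]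
  convert I.add_mem hfu hgw using 1
  ring

lemma KSosMod.smul {t : ℝ} (ht : 0 ≤ t) (hf : KSosMod I k f) : KSosMod I k (t • f) := by
  obtain ⟨r, u, hu, hfu⟩ := hf
  refine ⟨r, fun i => √t • u i, fun i => (MvPolynomial.totalDegree_smul_le _ _).trans (hu i), ?_⟩
  simp only [_root_.smul_pow, Real.sq_sqrt ht, ← Finset.smul_sum, ← smul_sub]
  exact I.smul_of_tower_mem t hfu

lemma IsRealRadical.kSosMod_of_kSosMod_neg_one (hrad : IsRealRadical I) (h : KSosMod I k (-1))
    (f : MvPolynomial (Fin n) ℝ) : KSosMod I k f := by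
  obtain ⟨r, g, -, hg⟩ := h
  have hone : (1 : MvPolynomial (Fin n) ℝ) ∈ I :=
    hrad 1 ⟨1, le_rfl, r, g, by simpa [add_comm] using I.neg_mem hg⟩
  exact kSosMod_of_mem ((Ideal.eq_top_of_isUnit_mem I hone isUnit_one).symm ▸ Submodule.mem_top)

end KSos

section Quotient
variable {n k : ℕ} {I : Ideal (MvPolynomial (Fin n) ℝ)}

noncomputable def restrictTotalDegreeQuot (I : Ideal (MvPolynomial (Fin n) ℝ)) (k : ℕ) :
    Submodule ℝ (MvPolynomial (Fin n) ℝ ⧸ I) :=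
  (MvPolynomial.restrictTotalDegree (Fin n) ℝ k).map (Ideal.Quotient.mkₐ ℝ I).toLinearMap

instance : FiniteDimensional ℝ (restrictTotalDegreeQuot I k) := by
  unfold restrictTotalDegreeQuot; infer_instance

lemma kSosMod_iff_exists_sum_sq {f : MvPolynomial (Fin n) ℝ} :
    KSosMod I k f ↔ ∃ (r : ℕ) (u : Fin r → restrictTotalDegreeQuot I k),
      Ideal.Quotient.mk I f = ∑ i, (u i : MvPolynomial (Fin n) ℝ ⧸ I) ^ 2 := by
  constructor
  · rintro ⟨r, g, hg, hfg⟩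
    refine ⟨r, fun i => ⟨Ideal.Quotient.mk I (g i), g i,
      (MvPolynomial.mem_restrictTotalDegree _ _ _).2 (hg i), rfl⟩, ?_⟩
    simpa [sub_eq_zero] using Ideal.Quotient.eq_zero_iff_mem.2 hfg
  · rintro ⟨r, u, hfu⟩
    choose g hg hgu using fun i => (u i).2
    refine ⟨r, g, fun i => (MvPolynomial.mem_restrictTotalDegree _ _ _).1 (hg i), ?_⟩
    rw [← Ideal.Quotient.eq_zero_iff_mem, map_sub, hfu, map_sum]
    simp [← hgu]

lemma IsRealRadical.eq_zero_of_sum_sq_eq_zero (hrad : IsRealRadical I) {r : ℕ}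
    (u : Fin r → MvPolynomial (Fin n) ℝ ⧸ I) (hu : ∑ i, u i ^ 2 = 0) (j : Fin r) : u j = 0 := by
  choose g hg using fun i => Ideal.Quotient.mk_surjective (u i)
  have hsum : ∑ i, g i ^ 2 ∈ I := by
    rw [← Ideal.Quotient.eq_zero_iff_mem, map_sum]
    simpa [hg] using hu
  rw [← hg, Ideal.Quotient.eq_zero_iff_mem]
  refine hrad (g j) ⟨1, le_rfl, r, Function.update g j 0, ?_⟩
  have hupdate : ∑ i, Function.update g j 0 i ^ 2 = ∑ i ∈ {j}ᶜ, g i ^ 2 := by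
    rw [Fintype.sum_eq_add_sum_compl j, Function.update_self, zero_pow two_ne_zero, zero_add]
    exact Finset.sum_congr rfl fun i hi => by rw [Function.update_of_ne (by simpa using hi)]
  rwa [hupdate, mul_one, ← Fintype.sum_eq_add_sum_compl j (fun i => g i ^ 2)]

noncomputable def kSosCone (I : Ideal (MvPolynomial (Fin n) ℝ)) (k : ℕ) :
    PointedCone ℝ (ℝ × (Fin n → ℝ)) where
  carrier := {v | KSosMod I k (linPoly v)}
  add_mem' {v w} hv hw := by simpa only [Set.mem_ofPred_eq, map_add] using hv.add hw
  zero_mem' := by simpa only [Set.mem_ofPred_eq, map_zero] using kSosMod_of_mem I.zero_mem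
  smul_mem' c v hv := show KSosMod I k (linPoly ((c : ℝ) • v)) by
    simpa only [map_smul] using hv.smul c.2

lemma isClosed_kSosCone (hrad : IsRealRadical I) :
    IsClosed (kSosCone I k : Set (ℝ × (Fin n → ℝ))) := by
  change IsClosed {v | KSosMod I k (linPoly v)}
  simp only [kSosMod_iff_exists_sum_sq]
  refine isClosed_setOf_eq_sum_sq (restrictTotalDegreeQuot I k) (fun u hu => funext fun j => ?_)
    ((Ideal.Quotient.mkₐ ℝ I).toLinearMap ∘ₗ linPoly)
  exact Subtype.ext (hrad.eq_zero_of_sum_sq_eq_zero _ hu j)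

end Quotient

section StronglyNonneg
variable {n m : ℕ}

lemma epsNonneg_of_sub_algebraMap_mem {z : Eps m} {a : ℝ} (ha : 0 < a)
    (hz : z - algebraMap ℝ (Eps m) a ∈ Ideal.span {AdjoinRoot.root (Polynomial.X ^ m)}) :
    EpsNonneg z := by
  obtain ⟨w, hw⟩ := Ideal.mem_span_singleton'.1 hz
  obtain ⟨q, rfl⟩ := AdjoinRoot.mk_surjective w
  have hcoeff : (Polynomial.C a + Polynomial.X * q).coeff 0 = a := by
    simp [Polynomial.mul_coeff_zero]
  refine Or.inr ⟨Polynomial.C a + Polynomial.X * q, ?_, ?_⟩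
  · rw [map_add, map_mul, AdjoinRoot.mk_C, AdjoinRoot.mk_X, ← AdjoinRoot.algebraMap_eq, mul_comm,
      hw, add_sub_cancel]
  · rwa [Polynomial.natTrailingDegree_eq_zero.2 (Or.inr (by rw [hcoeff]; exact ha.ne')), hcoeff]

lemma not_epsNonneg_algebraMap_of_neg (hm : m ≠ 0) {a : ℝ} (ha : a < 0) :
    ¬ EpsNonneg (algebraMap ℝ (Eps m) a) := by
  have hX : (Polynomial.X : Polynomial ℝ) ∣ Polynomial.X ^ m := dvd_pow_self _ hm
  rintro (h0 | ⟨p, hp, hpos⟩)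
  · rw [AdjoinRoot.algebraMap_eq, ← AdjoinRoot.mk_C, AdjoinRoot.mk_eq_zero] at h0
    have := Polynomial.X_dvd_iff.1 (hX.trans h0)
    simp [ha.ne] at this
  · rw [AdjoinRoot.algebraMap_eq, ← AdjoinRoot.mk_C, AdjoinRoot.mk_eq_mk] at hp
    have hp0 : p.coeff 0 = a := by
      simpa [sub_eq_zero] using Polynomial.X_dvd_iff.1 (hX.trans hp)
    rw [Polynomial.natTrailingDegree_eq_zero.2 (Or.inr (by rw [hp0]; exact ha.ne)), hp0] at hpos
    exact ha.not_gt hpos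

variable {I : Ideal (MvPolynomial (Fin n) ℝ)} {P : Fin n → ℝ}

noncomputable def evalEps (m : ℕ) (hP : P ∈ realVariety I) :
    (MvPolynomial (Fin n) ℝ ⧸ I) →ₐ[ℝ] Eps m :=
  (Algebra.ofId ℝ (Eps m)).comp
    (Ideal.Quotient.liftₐ I (MvPolynomial.aeval P) fun p hp => hP p hp)

lemma evalEps_mk (hP : P ∈ realVariety I) (p : MvPolynomial (Fin n) ℝ) :
    evalEps m hP (Ideal.Quotient.mk I p) = algebraMap ℝ (Eps m) (MvPolynomial.eval P p) :=
  rfl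

lemma atPoint_evalEps (hP : P ∈ realVariety I) : AtPoint I P (evalEps m hP) := fun p => by
  simp [evalEps_mk]

lemma StronglyNonneg.eval_nonneg {f : MvPolynomial (Fin n) ℝ}
    (hf : StronglyNonneg I (Ideal.Quotient.mk I f)) (hP : P ∈ realVariety I) :
    0 ≤ MvPolynomial.eval P f := by
  by_contra! hneg
  have h := hf P hP 1 (evalEps 1 hP) (atPoint_evalEps hP)
  rw [evalEps_mk] at h
  exact not_epsNonneg_algebraMap_of_neg one_ne_zero hneg h

lemma stronglyNonneg_of_eval_pos {f : MvPolynomial (Fin n) ℝ}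
    (hf : ∀ P ∈ realVariety I, 0 < MvPolynomial.eval P f) :
    StronglyNonneg I (Ideal.Quotient.mk I f) :=
  fun P hP _ _ hφ => epsNonneg_of_sub_algebraMap_mem (hf P hP) (hφ f)

end StronglyNonneg

section ThetaBody
variable {n k : ℕ} {I : Ideal (MvPolynomial (Fin n) ℝ)}

lemma LinearMap.apply_eq_dotProduct_single (ℓ : (Fin n → ℝ) →ₗ[ℝ] ℝ) (x : Fin n → ℝ) :
    ℓ x = (fun i => ℓ (Pi.single i 1)) ⬝ᵥ x := by
  rw [ℓ.pi_apply_eq_sum_univ x, dotProduct]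
  exact Finset.sum_congr rfl fun i _ => by
    rw [smul_eq_mul, mul_comm]
    congr 2
    funext j
    simp [Pi.single_apply, eq_comm]

lemma eval_nonneg_of_mem_closure_convexHull {f : MvPolynomial (Fin n) ℝ} (hf : f.totalDegree ≤ 1)
    (hV : ∀ P ∈ realVariety I, 0 ≤ MvPolynomial.eval P f) {x : Fin n → ℝ}
    (hx : x ∈ closure (convexHull ℝ (realVariety I))) : 0 ≤ MvPolynomial.eval x f := by
  obtain ⟨v, rfl⟩ := exists_linPoly_eq hf
  have hconv : Convex ℝ {x | 0 ≤ MvPolynomial.eval x (linPoly v)} := by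
    intro y hy z hz a b ha hb hab
    simp only [Set.mem_ofPred_eq, eval_linPoly, dotProduct_add, dotProduct_smul,
      smul_eq_mul] at hy hz ⊢
    have hv : v.1 = a * v.1 + b * v.1 := by rw [← add_mul, hab, one_mul]
    nlinarith [mul_nonneg ha hy, mul_nonneg hb hz]
  exact closure_minimal (convexHull_min hV hconv)
    (isClosed_le continuous_const (MvPolynomial.continuous_eval _)) hx

lemma closure_convexHull_subset_thetaBody :
    closure (convexHull ℝ (realVariety I)) ⊆ thetaBody I k :=
  fun _ hx _ hf hsos =>
    eval_nonneg_of_mem_closure_convexHull hf (fun _ hP => hsos.eval_nonneg hP) hx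

lemma exists_mem_thetaBody_of_nonneg_on_kSosMod (ℓ : (ℝ × (Fin n → ℝ)) →ₗ[ℝ] ℝ)
    (hℓ : ∀ v, KSosMod I k (linPoly v) → 0 ≤ ℓ v) (hpos : 0 < ℓ (1, 0)) :
    ∃ z ∈ thetaBody I k, ∀ v, ℓ v = ℓ (1, 0) * MvPolynomial.eval z (linPoly v) := by
  set z := (ℓ (1, 0))⁻¹ • fun i => ℓ (0, Pi.single i 1)
  have hrep : ∀ v, ℓ v = ℓ (1, 0) * MvPolynomial.eval z (linPoly v) := fun v => by
    have hsplit : v = v.1 • ((1 : ℝ), (0 : Fin n → ℝ)) + LinearMap.inr ℝ ℝ _ v.2 := by simp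
    conv_lhs => rw [hsplit, map_add, map_smul, ← LinearMap.comp_apply,
      LinearMap.apply_eq_dotProduct_single, dotProduct_comm]
    rw [eval_linPoly, dotProduct_smul]
    simp only [smul_eq_mul, LinearMap.comp_apply, LinearMap.inr_apply]
    field_simp
  refine ⟨z, fun f hf hsos => ?_, hrep⟩
  obtain ⟨v, rfl⟩ := exists_linPoly_eq hf
  exact (mul_nonneg_iff_of_pos_left hpos).1 (hrep v ▸ hℓ v hsos)

end ThetaBody

section Equivalence
variable {n k : ℕ} {I : Ideal (MvPolynomial (Fin n) ℝ)}

lemma WeaklyOneKSos.of_isDKSos (h : IsDKSos I 1 k) : WeaklyOneKSos I k :=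
  fun f hf hs => h f hf fun _ hP => hs.eval_nonneg hP

lemma ThetaExact.of_weaklyOneKSos (h : WeaklyOneKSos I k) : ThetaExact I k := by
  refine Set.Subset.antisymm (fun x hx => ?_) closure_convexHull_subset_thetaBody
  by_contra hxV
  obtain ⟨ℓ, u, hℓx, hℓV⟩ :=
    geometric_hahn_banach_point_closed (convex_convexHull ℝ _).closure isClosed_closure hxV
  set f := linPoly (-u, fun i => ℓ (Pi.single i 1))
  have hf : ∀ y, MvPolynomial.eval y f = ℓ y - u := fun y => by
    rw [eval_linPoly, ← ContinuousLinearMap.coe_coe, LinearMap.apply_eq_dotProduct_single]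
    simp only [ContinuousLinearMap.coe_coe]
    ring
  have hsos : KSosMod I k f := h f (totalDegree_linPoly_le _) <| stronglyNonneg_of_eval_pos
    fun P hP => (hf P).symm ▸ sub_pos.2 (hℓV P (subset_closure (subset_convexHull ℝ _ hP)))
  linarith [hf x ▸ hx f (totalDegree_linPoly_le _) hsos]

lemma IsDKSos.of_thetaExact (hrad : IsRealRadical I) (hex : ThetaExact I k) : IsDKSos I 1 k := by
  intro f hf hV
  obtain ⟨v, rfl⟩ := exists_linPoly_eq hf
  by_cases hneg : KSosMod I k (-1)
  · exact hrad.kSosMod_of_kSosMod_neg_one hneg _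
  by_contra hv
  let C : ProperCone ℝ (ℝ × (Fin n → ℝ)) := ⟨kSosCone I k, isClosed_kSosCone hrad⟩
  have hone : ((1, 0) : ℝ × (Fin n → ℝ)) ∈ C :=
    show KSosMod I k (linPoly (1, 0)) by simpa [linPoly] using kSosMod_one
  have hneg' : -((1, 0) : ℝ × (Fin n → ℝ)) ∉ C :=
    show ¬ KSosMod I k (linPoly (-(1, 0))) by simpa [linPoly] using hneg
  obtain ⟨ℓ, hℓC, hℓ1, hℓv⟩ := C.hyperplane_separation_point_of_neg_notMem hone hneg' hv
  obtain ⟨z, hz, hℓz⟩ := exists_mem_thetaBody_of_nonneg_on_kSosMod ℓ.toLinearMap hℓC hℓ1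
  refine hℓv.not_ge ?_
  rw [← ContinuousLinearMap.coe_coe, hℓz]
  exact mul_nonneg hℓ1.le
    (eval_nonneg_of_mem_closure_convexHull (totalDegree_linPoly_le v) hV (hex ▸ hz))

end Equivalence

theorem weaklyOneKSos_iff_oneKSos_iff_thetaExact_general {n : ℕ}
    (I : Ideal (MvPolynomial (Fin n) ℝ)) (hrad : IsRealRadical I) (k : ℕ) :
    (WeaklyOneKSos I k ↔ IsDKSos I 1 k) ∧ (IsDKSos I 1 k ↔ ThetaExact I k) :=
  ⟨⟨fun h => .of_thetaExact hrad (.of_weaklyOneKSos h), .of_isDKSos⟩,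
    ⟨fun h => .of_weaklyOneKSos (.of_isDKSos h), .of_thetaExact hrad⟩⟩

/-- For a real radical ideal `I`, the conditions "weakly `(1,k)`-sos", "`(1,k)`-sos" and
"`TH_k`-exact" are all equivalent. -/
theorem weaklyOneKSos_iff_oneKSos_iff_thetaExact {n : ℕ}
    (I : Ideal (MvPolynomial (Fin n) ℝ)) (hrad : IsRealRadical I) (k : ℕ) (hk : 1 ≤ k) :
    (WeaklyOneKSos I k ↔ IsDKSos I 1 k) ∧ (IsDKSos I 1 k ↔ ThetaExact I k) :=
  weaklyOneKSos_iff_oneKSos_iff_thetaExact_general I hrad k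
end
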